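/- arXiv:1207.6381 — 4 statements merged into one kernel-verified Lean document; each statement's English description precedes it below -/
import Mathlib

section
/- A feasible flow x of the minimum-cost flow problem is optimal if and only if the residual network G_x contains no directed cycle of negative total cost. -/
/-!
If a feasible `y` is cheaper than `x`, then `y - x` is a circulation of negative cost that moves
flow only along residual arcs of `x`. A nonzero circulation contains a cycle, repeating no arc,
that traverses each arc in the direction of the circulation's sign; subtracting it and recursing
splits the cost of the circulation into costs of such cycles, so one of them is a negative
residual cycle. Conversely, a negative residual closed walk carries a circulation of negative
cost, whose decomposition yields a negative residual cycle without repeated arcs, and pushing one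
unit around that cycle keeps `x` feasible and lowers its cost.
-/

open Finset

variable {V A : Type}

/-- Excess of node `i` with respect to pseudoflow `x` and supplies `b`. -/
def excess [Fintype A] [DecidableEq V] (src tgt : A → V) (b : V → ℤ)
    (x : A → ℤ) (i : V) : ℤ :=
  b i + ∑ a ∈ Finset.univ.filter (fun a => tgt a = i), x a
      - ∑ a ∈ Finset.univ.filter (fun a => src a = i), x a

/-- A pseudoflow obeys the nonnegativity and capacity constraints. -/
def IsPseudoflow (cap x : A → ℤ) : Prop := ∀ a, 0 ≤ x a ∧ x a ≤ cap a

/-- A feasible flow: pseudoflow satisfying the conservation constraints. -/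
def IsFeasible [Fintype A] [DecidableEq V] (src tgt : A → V) (b : V → ℤ)
    (cap x : A → ℤ) : Prop :=
  IsPseudoflow cap x ∧ ∀ i, excess src tgt b x i = 0

/-- Total cost of a flow. -/
def flowCost [Fintype A] (c x : A → ℤ) : ℤ := ∑ a, c a * x a

/-- An optimal solution of the minimum-cost flow problem. -/
def IsOptimal [Fintype A] [DecidableEq V] (src tgt : A → V) (b : V → ℤ)
    (cap c x : A → ℤ) : Prop :=
  IsFeasible src tgt b cap x ∧
    ∀ y, IsFeasible src tgt b cap y → flowCost c x ≤ flowCost c y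

/-- Source of a residual arc: `(a, true)` is the forward copy of `a`,
`(a, false)` the backward copy. -/
def rsrc (src tgt : A → V) (p : A × Bool) : V := if p.2 then src p.1 else tgt p.1

/-- Target of a residual arc. -/
def rtgt (src tgt : A → V) (p : A × Bool) : V := if p.2 then tgt p.1 else src p.1

/-- Cost of a residual arc. -/
def rcost (c : A → ℤ) (p : A × Bool) : ℤ := if p.2 then c p.1 else -c p.1

/-- Whether a (forward/backward) arc is present in the residual network of `x`. -/
def IsResidual (cap x : A → ℤ) (p : A × Bool) : Prop :=
  if p.2 then x p.1 < cap p.1 else 0 < x p.1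

/-- Reduced cost of a residual arc with respect to potentials `π`. -/
def redcost (src tgt : A → V) (c : A → ℤ) (π : V → ℝ) (p : A × Bool) : ℝ :=
  (rcost c p : ℝ) + π (rsrc src tgt p) - π (rtgt src tgt p)

/-- A directed cycle (closed directed walk), given by `k > 0` arcs in cyclic order. -/
def IsCycle {E : Type} (s t : E → V) {k : ℕ} (hk : 0 < k) (cyc : Fin k → E) : Prop :=
  ∀ i : Fin k, t (cyc i) = s (cyc ⟨(i.1 + 1) % k, Nat.mod_lt _ hk⟩)

/-- Underlying undirected (simple) graph of the arcs in `T`. -/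
def underlying (src tgt : A → V) (T : Finset A) : SimpleGraph V where
  Adj i j := i ≠ j ∧ ∃ a ∈ T, (src a = i ∧ tgt a = j) ∨ (src a = j ∧ tgt a = i)
  symm := by
    constructor
    rintro i j ⟨hij, a, haT, h⟩
    exact ⟨hij.symm, a, haT, h.symm⟩
  loopless := by constructor; rintro i ⟨h, -⟩; exact h rfl

/-- Total excess of the excess nodes. -/
def totalExcess [Fintype V] [Fintype A] [DecidableEq V]
    (src tgt : A → V) (b : V → ℤ) (x : A → ℤ) : ℤ :=
  ∑ i ∈ Finset.univ.filter (fun i => 0 < excess src tgt b x i), excess src tgt b x i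

theorem flowCost_add [Fintype A] (c x y : A → ℤ) :
    flowCost c (x + y) = flowCost c x + flowCost c y := by
  simp only [flowCost, Pi.add_apply, mul_add, sum_add_distrib]

theorem flowCost_sub [Fintype A] (c x y : A → ℤ) :
    flowCost c (x - y) = flowCost c x - flowCost c y := by
  simp only [flowCost, Pi.sub_apply, mul_sub, sum_sub_distrib]

section Circulation

variable [Fintype A] [DecidableEq V] (src tgt : A → V)

def IsCirculation (g : A → ℤ) : Prop := ∀ i, excess src tgt 0 g i = 0

theorem excess_add (b b' : V → ℤ) (x y : A → ℤ) (i : V) :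
    excess src tgt (b + b') (x + y) i = excess src tgt b x i + excess src tgt b' y i := by
  simp only [excess, Pi.add_apply, sum_add_distrib]
  ring

theorem excess_sub (b b' : V → ℤ) (x y : A → ℤ) (i : V) :
    excess src tgt (b - b') (x - y) i = excess src tgt b x i - excess src tgt b' y i := by
  simp only [excess, Pi.sub_apply, sum_sub_distrib]
  ring

theorem excess_zero_eq_flowCost (g : A → ℤ) (i : V) :
    excess src tgt 0 g i =
      flowCost (fun a => (if tgt a = i then 1 else 0) - if src a = i then 1 else 0) g := by
  simp only [excess, flowCost, Pi.zero_apply, zero_add, sub_mul, sum_sub_distrib, ite_mul,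
    one_mul, zero_mul, sum_ite, sum_const_zero, add_zero]

variable {src tgt} in
theorem IsCirculation.sub {g h : A → ℤ} (hg : IsCirculation src tgt g)
    (hh : IsCirculation src tgt h) : IsCirculation src tgt (g - h) := fun i => by
  simpa [hg i, hh i] using excess_sub src tgt 0 0 g h i

variable {src tgt} in
theorem IsFeasible.isCirculation_sub {b : V → ℤ} {cap x y : A → ℤ}
    (hy : IsFeasible src tgt b cap y) (hx : IsFeasible src tgt b cap x) :
    IsCirculation src tgt (y - x) := fun i => by
  simpa [hx.2 i, hy.2 i] using excess_sub src tgt b b y x i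

end Circulation

section Cycle

variable {E : Type} {s t : E → V}

theorem IsCycle.sum_comp_tgt {M : Type} [AddCommMonoid M] {k : ℕ} {hk : 0 < k}
    {cyc : Fin k → E} (hcyc : IsCycle s t hk cyc) (φ : V → M) :
    ∑ n, φ (t (cyc n)) = ∑ n, φ (s (cyc n)) := by
  obtain ⟨m, rfl⟩ : ∃ m, k = m + 1 := ⟨k - 1, by omega⟩
  have hsucc (n : Fin (m + 1)) : t (cyc n) = s (cyc (finRotate _ n)) := by
    rw [hcyc n, finRotate_apply]
    congr 2
    ext
    simp [Fin.val_add]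
  simp only [hsucc]
  exact Fintype.sum_equiv (finRotate _) _ _ fun _ => rfl

theorem exists_injective_isCycle [Finite E] (P : E → Prop) (hP : ∃ p, P p)
    (hsucc : ∀ p, P p → ∃ q, P q ∧ s q = t p) :
    ∃ (k : ℕ) (hk : 0 < k) (cyc : Fin k → E),
      Function.Injective cyc ∧ (∀ n, P (cyc n)) ∧ IsCycle s t hk cyc := by
  choose! nxt hnxt using hsucc
  let f : {p // P p} → {p // P p} := fun p => ⟨nxt p, (hnxt p p.2).1⟩
  obtain ⟨p, hp⟩ := hP
  obtain ⟨i, j, hij, hfij⟩ := Finite.exists_ne_map_eq_of_infinite fun n => f^[n] ⟨p, hp⟩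
  wlog hlt : i < j generalizing i j
  · exact this j i hij.symm hfij.symm (by omega)
  set q := f^[i] ⟨p, hp⟩
  have hq : q ∈ Function.periodicPts f := by
    refine Function.mk_mem_periodicPts (n := j - i) (by omega) ?_
    rw [Function.IsPeriodicPt, Function.IsFixedPt, ← Function.iterate_add_apply,
      Nat.sub_add_cancel hlt.le]
    exact hfij.symm
  have hk := Function.minimalPeriod_pos_of_mem_periodicPts hq
  refine ⟨_, hk, fun n => (f^[n] q).1, fun m n hmn => ?_, fun n => (f^[n] q).2, fun n => ?_⟩
  · exact Fin.ext (Function.iterate_injOn_Iio_minimalPeriod m.2 n.2 (Subtype.ext hmn))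
  · simp only [Function.iterate_mod_minimalPeriod_eq, Function.iterate_succ_apply']
    exact ((hnxt _ (f^[n] q).2).2).symm

end Cycle

def IsSupportArc (g : A → ℤ) (p : A × Bool) : Prop := if p.2 then 0 < g p.1 else g p.1 < 0

theorem IsSupportArc.ne_zero {g : A → ℤ} {p : A × Bool} (hp : IsSupportArc g p) :
    g p.1 ≠ 0 := by
  unfold IsSupportArc at hp
  split_ifs at hp <;> omega

section WalkFlow

variable {k : ℕ} {cyc : Fin k → A × Bool} {g : A → ℤ}

-- the flow of one unit pushed around the closed walk `cyc`
open Classical in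
noncomputable def walkFlow (cyc : Fin k → A × Bool) (a : A) : ℤ :=
  #{n | cyc n = (a, true)} - #{n | cyc n = (a, false)}

theorem flowCost_walkFlow [Fintype A] (f : A → ℤ) (cyc : Fin k → A × Bool) :
    flowCost f (walkFlow cyc) = ∑ n, rcost f (cyc n) := by
  classical
  calc flowCost f (walkFlow cyc)
      = ∑ a, ∑ n, f a * ((if cyc n = (a, true) then 1 else 0) -
          if cyc n = (a, false) then 1 else 0) := by
        simp only [flowCost, walkFlow, card_filter, Nat.cast_sum, Nat.cast_ite, Nat.cast_one,
          Nat.cast_zero, mul_sum, mul_sub, sum_sub_distrib]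
    _ = ∑ n, rcost f (cyc n) := by
        rw [sum_comm]
        refine sum_congr rfl fun n _ => ?_
        obtain ⟨a, _ | _⟩ := cyc n <;> simp [rcost, eq_comm]

theorem isCirculation_walkFlow [Fintype A] [DecidableEq V] {src tgt : A → V} (hk : 0 < k)
    (hcyc : IsCycle (rsrc src tgt) (rtgt src tgt) hk cyc) :
    IsCirculation src tgt (walkFlow cyc) := fun i => by
  have hrcost (p : A × Bool) :
      rcost (fun a => (if tgt a = i then 1 else 0) - if src a = i then 1 else 0) p =
        (if rtgt src tgt p = i then 1 else 0) - if rsrc src tgt p = i then 1 else 0 := by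
    obtain ⟨a, _ | _⟩ := p <;> simp [rcost, rsrc, rtgt]
  rw [excess_zero_eq_flowCost, flowCost_walkFlow]
  simp only [hrcost, sum_sub_distrib]
  rw [hcyc.sum_comp_tgt (fun v => if v = i then (1 : ℤ) else 0), sub_self]

theorem exists_eq_of_isSupportArc_walkFlow {p : A × Bool} (hp : IsSupportArc (walkFlow cyc) p) :
    ∃ n, cyc n = p := by
  classical
  obtain ⟨a, b⟩ := p
  suffices 0 < #{n | cyc n = (a, b)} by simpa [filter_nonempty_iff] using this
  cases b <;> simp only [IsSupportArc, Bool.false_eq_true, ↓reduceIte, walkFlow, sub_neg,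
    sub_pos, Nat.cast_lt] at hp <;> omega

theorem abs_walkFlow_le_one (hinj : Function.Injective cyc) (a : A) : |walkFlow cyc a| ≤ 1 := by
  classical
  have hfiber (p : A × Bool) : #{n | cyc n = p} ≤ 1 :=
    card_le_one.2 fun _ hm _ hn => hinj ((mem_filter.1 hm).2.trans (mem_filter.1 hn).2.symm)
  have := hfiber (a, true)
  have := hfiber (a, false)
  rw [abs_le]
  constructor <;> simp only [walkFlow] <;> omega

theorem isSupportArc_walkFlow_of_isSupportArc (hsupp : ∀ n, IsSupportArc g (cyc n))
    (n : Fin k) :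
    IsSupportArc (walkFlow cyc) (cyc n) := by
  classical
  obtain ⟨⟨a, b⟩, hn⟩ : ∃ p, cyc n = p := ⟨_, rfl⟩
  have hown : 0 < #{m | cyc m = (a, b)} := card_pos.2 ⟨n, by simp [hn]⟩
  have hopp : #{m | cyc m = (a, !b)} = 0 := by
    refine card_eq_zero.2 (filter_eq_empty_iff.2 fun m _ hm => ?_)
    have h₁ := hsupp m
    have h₂ := hsupp n
    rw [hm] at h₁
    rw [hn] at h₂
    cases b <;> simp only [IsSupportArc, Bool.not_false, Bool.not_true, Bool.false_eq_true,
      ↓reduceIte] at h₁ h₂ <;> omega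
  rw [hn]
  cases b <;> simp only [Bool.not_true, Bool.not_false] at hopp <;>
    simp only [IsSupportArc, walkFlow, Bool.false_eq_true, ↓reduceIte] <;> omega

theorem isSupportArc_of_isSupportArc_walkFlow (hsupp : ∀ n, IsSupportArc g (cyc n))
    {p : A × Bool} (hp : IsSupportArc (walkFlow cyc) p) : IsSupportArc g p := by
  obtain ⟨n, rfl⟩ := exists_eq_of_isSupportArc_walkFlow hp
  exact hsupp n

theorem walkFlow_trichotomy (hinj : Function.Injective cyc)
    (hsupp : ∀ n, IsSupportArc g (cyc n)) (a : A) :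
    walkFlow cyc a = 0 ∨ (walkFlow cyc a = 1 ∧ 0 < g a) ∨
      (walkFlow cyc a = -1 ∧ g a < 0) := by
  have hpos : 0 < walkFlow cyc a → 0 < g a := by
    simpa [IsSupportArc] using isSupportArc_of_isSupportArc_walkFlow hsupp (p := (a, true))
  have hneg : walkFlow cyc a < 0 → g a < 0 := by
    simpa [IsSupportArc] using isSupportArc_of_isSupportArc_walkFlow hsupp (p := (a, false))
  have := abs_le.1 (abs_walkFlow_le_one hinj a)
  omega

theorem isSupportArc_of_isSupportArc_sub_walkFlow (hinj : Function.Injective cyc)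
    (hsupp : ∀ n, IsSupportArc g (cyc n)) {p : A × Bool}
    (hp : IsSupportArc (g - walkFlow cyc) p) : IsSupportArc g p := by
  obtain ⟨a, _ | _⟩ := p <;>
    simp only [IsSupportArc, Pi.sub_apply, Bool.false_eq_true, ↓reduceIte] at hp ⊢ <;>
    rcases walkFlow_trichotomy hinj hsupp a with h | h | h <;> omega

theorem sum_natAbs_sub_walkFlow_lt [Fintype A] (hk : 0 < k) (hinj : Function.Injective cyc)
    (hsupp : ∀ n, IsSupportArc g (cyc n)) :
    ∑ a, (g a - walkFlow cyc a).natAbs < ∑ a, (g a).natAbs := by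
  refine sum_lt_sum (fun a _ => ?_) ⟨(cyc ⟨0, hk⟩).1, mem_univ _, ?_⟩
  · rcases walkFlow_trichotomy hinj hsupp a with h | h | h <;> omega
  · have h₀ := (isSupportArc_walkFlow_of_isSupportArc hsupp ⟨0, hk⟩).ne_zero
    rcases walkFlow_trichotomy hinj hsupp (cyc ⟨0, hk⟩).1 with h | h | h <;> omega

end WalkFlow

theorem IsFeasible.add_walkFlow [Fintype A] [DecidableEq V] {src tgt : A → V} {b : V → ℤ}
    {cap x : A → ℤ} (hx : IsFeasible src tgt b cap x) {k : ℕ} {hk : 0 < k}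
    {cyc : Fin k → A × Bool} (hinj : Function.Injective cyc)
    (hres : ∀ n, IsResidual cap x (cyc n)) (hcyc : IsCycle (rsrc src tgt) (rtgt src tgt) hk cyc) :
    IsFeasible src tgt b cap (x + walkFlow cyc) := by
  have hres' {p : A × Bool} (hp : IsSupportArc (walkFlow cyc) p) : IsResidual cap x p := by
    obtain ⟨n, rfl⟩ := exists_eq_of_isSupportArc_walkFlow hp
    exact hres n
  refine ⟨fun a => ?_, fun i => ?_⟩
  · have hfwd : 0 < walkFlow cyc a → x a < cap a := by
      simpa [IsSupportArc, IsResidual] using hres' (p := (a, true))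
    have hbwd : walkFlow cyc a < 0 → 0 < x a := by
      simpa [IsSupportArc, IsResidual] using hres' (p := (a, false))
    have hδ := abs_le.1 (abs_walkFlow_le_one hinj a)
    have hxa := hx.1 a
    simp only [Pi.add_apply]
    omega
  · rw [← add_zero b, excess_add, hx.2 i, isCirculation_walkFlow hk hcyc i, add_zero]

section Decomposition

variable [Fintype A] [DecidableEq V] {src tgt : A → V} {g : A → ℤ}

theorem IsCirculation.exists_isSupportArc_rsrc_eq (hg : IsCirculation src tgt g)
    {p : A × Bool} (hp : IsSupportArc g p) :
    ∃ q, IsSupportArc g q ∧ rsrc src tgt q = rtgt src tgt p := by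
  by_contra! h
  set v := rtgt src tgt p
  have hout (a : A) (ha : src a = v) : g a ≤ 0 :=
    not_lt.1 fun hpos => h (a, true) (by simpa [IsSupportArc] using hpos) (by simpa [rsrc])
  have hin (a : A) (ha : tgt a = v) : 0 ≤ g a :=
    not_lt.1 fun hneg => h (a, false) (by simpa [IsSupportArc] using hneg) (by simpa [rsrc])
  have hbal := hg v
  simp only [excess, Pi.zero_apply, zero_add, sub_eq_zero] at hbal
  obtain ⟨a, _ | _⟩ := p
  · have : ∑ a ∈ univ.filter (fun a => src a = v), g a < 0 :=
      sum_neg' (fun a ha => hout a (mem_filter.1 ha).2)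
        ⟨a, by simp [v, rtgt], by simpa [IsSupportArc] using hp⟩
    have : 0 ≤ ∑ a ∈ univ.filter (fun a => tgt a = v), g a :=
      sum_nonneg fun a ha => hin a (mem_filter.1 ha).2
    omega
  · have : 0 < ∑ a ∈ univ.filter (fun a => tgt a = v), g a :=
      sum_pos' (fun a ha => hin a (mem_filter.1 ha).2)
        ⟨a, by simp [v, rtgt], by simpa [IsSupportArc] using hp⟩
    have : ∑ a ∈ univ.filter (fun a => src a = v), g a ≤ 0 :=
      sum_nonpos fun a ha => hout a (mem_filter.1 ha).2
    omega

theorem IsCirculation.exists_isCycle (hg : IsCirculation src tgt g) (hne : ∃ a, g a ≠ 0) :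
    ∃ (k : ℕ) (hk : 0 < k) (cyc : Fin k → A × Bool), Function.Injective cyc ∧
      (∀ n, IsSupportArc g (cyc n)) ∧ IsCycle (rsrc src tgt) (rtgt src tgt) hk cyc := by
  obtain ⟨a, ha⟩ := hne
  have hp : ∃ p, IsSupportArc g p := by
    rcases ha.lt_or_gt with h | h
    exacts [⟨(a, false), by simpa [IsSupportArc]⟩, ⟨(a, true), by simpa [IsSupportArc]⟩]
  exact exists_injective_isCycle _ hp fun p hp => hg.exists_isSupportArc_rsrc_eq hp

theorem IsCirculation.exists_negative_isCycle (hg : IsCirculation src tgt g)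
    {c : A → ℤ} (hcost : flowCost c g < 0) :
    ∃ (k : ℕ) (hk : 0 < k) (cyc : Fin k → A × Bool), Function.Injective cyc ∧
      (∀ n, IsSupportArc g (cyc n)) ∧ IsCycle (rsrc src tgt) (rtgt src tgt) hk cyc ∧
      ∑ n, rcost c (cyc n) < 0 := by
  induction hN : ∑ a, (g a).natAbs using Nat.strong_induction_on generalizing g with
  | _ N ih =>
    have hne : ∃ a, g a ≠ 0 := by
      by_contra! h0
      simp [flowCost, h0] at hcost
    obtain ⟨k, hk, cyc, hinj, hsupp, hcyc⟩ := hg.exists_isCycle hne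
    by_cases hneg : ∑ n, rcost c (cyc n) < 0
    · exact ⟨k, hk, cyc, hinj, hsupp, hcyc, hneg⟩
    obtain ⟨k', hk', cyc', hinj', hsupp', hcyc', hneg'⟩ :=
      ih _ (hN ▸ sum_natAbs_sub_walkFlow_lt hk hinj hsupp)
        (hg.sub (isCirculation_walkFlow hk hcyc))
        (by rw [flowCost_sub, flowCost_walkFlow]; omega) rfl
    exact ⟨k', hk', cyc', hinj', fun n => isSupportArc_of_isSupportArc_sub_walkFlow hinj hsupp
      (hsupp' n), hcyc', hneg'⟩

end Decomposition

theorem IsPseudoflow.isResidual_of_isSupportArc_sub {cap x y : A → ℤ} (hy : IsPseudoflow cap y)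
    {p : A × Bool} (hp : IsSupportArc (y - x) p) : IsResidual cap x p := by
  obtain ⟨a, _ | _⟩ := p <;> have := hy a <;>
    simp only [IsSupportArc, IsResidual, Pi.sub_apply, Bool.false_eq_true, ↓reduceIte]
      at hp ⊢ <;>
    omega

theorem negative_cycle_optimality_general [Fintype A] [DecidableEq V]
    (src tgt : A → V) (b : V → ℤ) (cap c x : A → ℤ)
    (hx : IsFeasible src tgt b cap x) :
    IsOptimal src tgt b cap c x ↔
      ¬ ∃ (k : ℕ) (hk : 0 < k) (cyc : Fin k → A × Bool),
          (∀ i, IsResidual cap x (cyc i)) ∧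
          IsCycle (rsrc src tgt) (rtgt src tgt) hk cyc ∧
          ∑ i, rcost c (cyc i) < 0 := by
  constructor
  · rintro hopt ⟨k, hk, walk, hres, hwalk, hneg⟩
    obtain ⟨k', hk', cyc, hinj, hsupp, hcyc, hcyc_neg⟩ :=
      (isCirculation_walkFlow hk hwalk).exists_negative_isCycle
        (c := c) (by rwa [flowCost_walkFlow])
    have hcyc_res (n : Fin k') : IsResidual cap x (cyc n) := by
      obtain ⟨m, hm⟩ := exists_eq_of_isSupportArc_walkFlow (hsupp n)
      exact hm ▸ hres m
    have hle := hopt.2 _ (hx.add_walkFlow hinj hcyc_res hcyc)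
    rw [flowCost_add, flowCost_walkFlow] at hle
    omega
  · refine fun hnc => ⟨hx, fun y hy => not_lt.1 fun hlt => hnc ?_⟩
    obtain ⟨k, hk, cyc, -, hsupp, hcyc, hneg⟩ :=
      (hy.isCirculation_sub hx).exists_negative_isCycle (c := c) (by rw [flowCost_sub]; omega)
    exact ⟨k, hk, cyc, fun n => hy.1.isResidual_of_isSupportArc_sub (hsupp n), hcyc, hneg⟩

/-- a feasible flow is optimal iff the residual network contains no
directed cycle of negative total cost. -/
theorem negative_cycle_optimality [Fintype V] [Fintype A] [DecidableEq V]
    (src tgt : A → V) (b : V → ℤ) (cap c x : A → ℤ)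
    (hx : IsFeasible src tgt b cap x) :
    IsOptimal src tgt b cap c x ↔
      ¬ ∃ (k : ℕ) (hk : 0 < k) (cyc : Fin k → A × Bool),
          (∀ i, IsResidual cap x (cyc i)) ∧
          IsCycle (rsrc src tgt) (rtgt src tgt) hk cyc ∧
          ∑ i, rcost c (cyc i) < 0 :=
  negative_cycle_optimality_general src tgt b cap c x hx
end

section
/- In the cost-scaling refine procedure, decreasing the potential of a node i by ε (a relabel operation), when node i has no admissible outgoing residual arc, preserves the ε-optimality conditions: all residual arcs still have reduced cost at least −ε. -/
/-! Lowering `π i` by `ε` lowers the reduced cost of an arc by at most `ε`, and lowers it at all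
only on arcs leaving `i`, whose reduced costs were nonnegative. -/

open Finset

variable {V A : Type}

section Relabel

variable {R : Type*} [DecidableEq V]

def relabel [Sub R] (π : V → R) (i : V) (ε : R) : V → R :=
  fun j => if j = i then π i - ε else π j

theorem relabel_of_ne [Sub R] {π : V → R} {i j : V} {ε : R} (h : j ≠ i) :
    relabel π i ε j = π j :=
  if_neg h

variable [AddCommGroup R] [PartialOrder R] [IsOrderedAddMonoid R] (π : V → R) (i : V) {ε : R}

theorem relabel_le (hε : 0 ≤ ε) (j : V) : relabel π i ε j ≤ π j := by
  unfold relabel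
  split_ifs with h
  · subst h; exact sub_le_self _ hε
  · exact le_rfl

theorem sub_le_relabel (hε : 0 ≤ ε) (j : V) : π j - ε ≤ relabel π i ε j := by
  unfold relabel
  split_ifs with h
  · rw [h]
  · exact sub_le_self _ hε

end Relabel

section RedcostRelabel

variable [DecidableEq V] (src tgt : A → V) (c : A → ℤ) (π : V → ℝ) (i : V) {ε : ℝ}

theorem redcost_sub_le_redcost_relabel (hε : 0 ≤ ε) (p : A × Bool) :
    redcost src tgt c π p - ε ≤ redcost src tgt c (relabel π i ε) p := by
  unfold redcost
  linarith [sub_le_relabel π i hε (rsrc src tgt p), relabel_le π i hε (rtgt src tgt p)]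

theorem redcost_le_redcost_relabel (hε : 0 ≤ ε) {p : A × Bool} (hp : rsrc src tgt p ≠ i) :
    redcost src tgt c π p ≤ redcost src tgt c (relabel π i ε) p := by
  unfold redcost
  rw [relabel_of_ne hp]
  linarith [relabel_le π i hε (rtgt src tgt p)]

end RedcostRelabel

/-- relabeling a node with no admissible outgoing residual arc
(decreasing its potential by `ε`) preserves the `ε`-optimality conditions. -/
theorem relabel_preserves_eps_opt [DecidableEq V]
    (src tgt : A → V) (cap c x : A → ℤ) (π : V → ℝ) (ε : ℝ) (i : V) (hε : 0 ≤ ε)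
    (hopt : ∀ p : A × Bool, IsResidual cap x p → -ε ≤ redcost src tgt c π p)
    (hnoadm : ∀ p : A × Bool, IsResidual cap x p → rsrc src tgt p = i →
        0 ≤ redcost src tgt c π p) :
    ∀ p : A × Bool, IsResidual cap x p →
      -ε ≤ redcost src tgt c (fun j => if j = i then π i - ε else π j) p := by
  intro p hp
  change -ε ≤ redcost src tgt c (relabel π i ε) p
  by_cases hsrc : rsrc src tgt p = i
  · linarith [hnoadm p hp hsrc, redcost_sub_le_redcost_relabel src tgt c π i hε p]
  · linarith [hopt p hp, redcost_le_redcost_relabel src tgt c π i hε hsrc]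
end

section
/- The global update operation is valid: if S ⊂ V is a set of nodes containing all deficit nodes such that no admissible arc of the residual network enters S, then increasing the potential of every node in S by ε preserves the ε-optimality conditions. -/
open Finset

variable {V A : Type}

/- Raising the potentials on `S` by `ε` changes the reduced cost of a residual arc only when it
crosses the cut: an arc leaving `S` gains `ε` and stays `≥ -ε` since `ε ≥ 0`, and an arc entering
`S` loses `ε`, but it was not admissible, so its reduced cost was `≥ 0` and becomes `≥ -ε`. -/

theorem redcost_raise_potential_on [DecidableEq V] (src tgt : A → V) (c : A → ℤ) (π : V → ℝ) (ε : ℝ)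
    (S : Finset V) (p : A × Bool) :
    redcost src tgt c (fun i => if i ∈ S then π i + ε else π i) p =
      redcost src tgt c π p + (if rsrc src tgt p ∈ S then ε else 0)
        - (if rtgt src tgt p ∈ S then ε else 0) := by
  dsimp only [redcost]
  split_ifs <;> ring

theorem set_relabel_preserves_eps_opt_general [DecidableEq V]
    (src tgt : A → V) (cap c x : A → ℤ) (π : V → ℝ) (ε : ℝ)
    (S : Finset V) (hε : 0 ≤ ε)
    (hopt : ∀ p : A × Bool, IsResidual cap x p → -ε ≤ redcost src tgt c π p)
    (hnoadm : ∀ p : A × Bool, IsResidual cap x p →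
        rtgt src tgt p ∈ S → rsrc src tgt p ∉ S → 0 ≤ redcost src tgt c π p) :
    ∀ p : A × Bool, IsResidual cap x p →
      -ε ≤ redcost src tgt c (fun i => if i ∈ S then π i + ε else π i) p := by
  intro p hp
  have hold := hopt p hp
  rw [redcost_raise_potential_on]
  split_ifs with hsrc htgt htgt
  · linarith
  · linarith
  · linarith [hnoadm p hp htgt hsrc]
  · linarith

/-- the global update (set-relabel) operation is valid: if `S`
contains all deficit nodes and no admissible residual arc enters `S`, then
increasing the potential of every node of `S` by `ε` preserves `ε`-optimality. -/
theorem set_relabel_preserves_eps_opt [Fintype A] [DecidableEq V]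
    (src tgt : A → V) (b : V → ℤ) (cap c x : A → ℤ) (π : V → ℝ) (ε : ℝ)
    (S : Finset V) (hε : 0 ≤ ε)
    (hx : IsPseudoflow cap x)
    (hdef : ∀ i, excess src tgt b x i < 0 → i ∈ S)
    (hopt : ∀ p : A × Bool, IsResidual cap x p → -ε ≤ redcost src tgt c π p)
    (hnoadm : ∀ p : A × Bool, IsResidual cap x p →
        rtgt src tgt p ∈ S → rsrc src tgt p ∉ S → 0 ≤ redcost src tgt c π p) :
    ∀ p : A × Bool, IsResidual cap x p →
      -ε ≤ redcost src tgt c (fun i => if i ∈ S then π i + ε else π i) p :=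
  set_relabel_preserves_eps_opt_general src tgt cap c x π ε S hε hopt hnoadm
end

section
/- Any feasible flow can be transformed into a spanning tree solution whose total cost is less than or equal to the total cost of the original flow. -/
open Finset

variable {V A : Type}

/-!
Among the feasible flows costing at most as much as `x`, take one with the fewest free arcs
(`0 < x a < cap a`). Its free arcs form a forest: otherwise they contain a loop, two parallel arcs
or an undirected cycle, and pushing flow around it, in the direction that does not increase the
cost, until some arc hits a bound would free fewer arcs. A forest extends to a spanning tree `T`
of the connected underlying graph, and every arc outside `T` carries flow `0` or `cap`.
-/

def netInflow [Fintype A] [DecidableEq V] (src tgt : A → V) : (A → ℤ) →ₗ[ℤ] (V → ℤ) where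
  toFun d i := ∑ a ∈ univ.filter (fun a => tgt a = i), d a
    - ∑ a ∈ univ.filter (fun a => src a = i), d a
  map_add' d e := by ext i; simp only [Pi.add_apply, sum_add_distrib]; ring
  map_smul' t d := by
    ext i; simp only [Pi.smul_apply, smul_eq_mul, ← mul_sum, RingHom.id_apply]; ring

def freeArcs [Fintype A] (cap x : A → ℤ) : Finset A := univ.filter (fun a => 0 < x a ∧ x a < cap a)

section Flows

variable [Fintype A] [DecidableEq V] {src tgt : A → V} {b : V → ℤ} {cap x : A → ℤ}

lemma netInflow_apply (d : A → ℤ) (i : V) :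
    netInflow src tgt d i = ∑ a ∈ univ.filter (fun a => tgt a = i), d a
      - ∑ a ∈ univ.filter (fun a => src a = i), d a := rfl

lemma excess_eq_add_netInflow (i : V) :
    excess src tgt b x i = b i + netInflow src tgt x i :=
  add_sub_assoc _ _ _

lemma flowCost_eq_dotProduct (c : A → ℤ) : flowCost c x = c ⬝ᵥ x := rfl

lemma IsFeasible.add_smul (hx : IsFeasible src tgt b cap x) {D : A → ℤ}
    (hD : netInflow src tgt D = 0) (t : ℤ) (ht : IsPseudoflow cap (x + t • D)) :
    IsFeasible src tgt b cap (x + t • D) := by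
  refine ⟨ht, fun i => ?_⟩
  rw [excess_eq_add_netInflow, map_add, map_smul, hD, smul_zero, add_zero,
    ← excess_eq_add_netInflow]
  exact hx.2 i

lemma exists_isPseudoflow_not_succ (hx : IsPseudoflow cap x) {D : A → ℤ} (hD1 : ∀ a, |D a| ≤ 1)
    (hDfree : ∀ a, D a ≠ 0 → a ∈ freeArcs cap x) (hD0 : D ≠ 0) :
    ∃ m : ℕ, IsPseudoflow cap (x + (m : ℤ) • D) ∧
      ¬IsPseudoflow cap (x + ((m + 1 : ℕ) : ℤ) • D) := by
  obtain ⟨a, ha⟩ := Function.ne_iff.mp hD0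
  have hfree := (mem_filter.mp (hDfree a ha)).2
  have hleave : ¬IsPseudoflow cap (x + (((cap a).toNat + 1 : ℕ) : ℤ) • D) := fun h => by
    have := h a
    simp only [Pi.add_apply, Pi.smul_apply, smul_eq_mul, Pi.zero_apply] at this ha
    rcases abs_le.mp (hD1 a) with ⟨h1, h2⟩
    obtain h | h : D a = 1 ∨ D a = -1 := by omega
    all_goals rw [h] at this; push_cast at this; omega
  by_contra! h
  exact hleave (Nat.rec (motive := fun n => IsPseudoflow cap (x + (n : ℤ) • D))
    (by simpa using hx) h _)

lemma exists_feasible_freeArcs_ssubset_of_circulation (c : A → ℤ)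
    (hx : IsFeasible src tgt b cap x) {D : A → ℤ} (hD : netInflow src tgt D = 0)
    (hD1 : ∀ a, |D a| ≤ 1) (hDfree : ∀ a, D a ≠ 0 → a ∈ freeArcs cap x) (hD0 : D ≠ 0)
    (hcost : flowCost c D ≤ 0) :
    ∃ x', IsFeasible src tgt b cap x' ∧ flowCost c x' ≤ flowCost c x ∧
      freeArcs cap x' ⊂ freeArcs cap x := by
  obtain ⟨m, hm, hm1⟩ := exists_isPseudoflow_not_succ hx.1 hD1 hDfree hD0
  refine ⟨x + (m : ℤ) • D, hx.add_smul hD _ hm, ?_, ?_⟩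
  · simp only [flowCost_eq_dotProduct, dotProduct_add, dotProduct_smul, smul_eq_mul] at hcost ⊢
    nlinarith
  -- the arc blocking step `m + 1` sits at one of its bounds after step `m`, as `|D a| = 1`
  obtain ⟨a, ha⟩ : ∃ a, ¬(0 ≤ x a + (m + 1) * D a ∧ x a + (m + 1) * D a ≤ cap a) := by
    simpa [IsPseudoflow] using hm1
  have hma := hm a
  simp only [Pi.add_apply, Pi.smul_apply, smul_eq_mul] at hma
  have hDa : D a ≠ 0 := fun h => ha (by simpa [h] using hma)
  have hfree := hDfree a hDa
  rw [Finset.ssubset_iff_of_subset]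
  · refine ⟨a, hfree, fun h => ?_⟩
    simp only [freeArcs, mem_filter, Pi.add_apply, Pi.smul_apply, smul_eq_mul] at h hfree
    rcases abs_le.mp (hD1 a) with ⟨h1, h2⟩
    obtain h' | h' : D a = 1 ∨ D a = -1 := by omega
    all_goals rw [h'] at ha h; omega
  · intro a' ha'
    by_cases hDa' : D a' = 0
    · simpa [freeArcs, hDa'] using ha'
    · exact hDfree a' hDa'

end Flows

section Residual

variable [DecidableEq A]

def rdir (q : A × Bool) : A → ℤ := Pi.single q.1 (if q.2 then 1 else -1)

lemma abs_sum_rdir_apply {l : List (A × Bool)} (hl : (l.map Prod.fst).Nodup) (a : A) :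
    |(l.map rdir).sum a| = if a ∈ l.map Prod.fst then 1 else 0 := by
  induction l with
  | nil => simp
  | cons q l ih =>
    rw [List.map_cons, List.nodup_cons] at hl
    rw [List.map_cons, List.sum_cons, Pi.add_apply]
    by_cases hq : q.1 = a
    · subst hq
      rcases q with ⟨a, _ | _⟩ <;> simp_all [rdir]
    · simp [rdir, Ne.symm hq, ih hl.2]

variable [Fintype A] [DecidableEq V] {src tgt : A → V}

lemma netInflow_rdir (q : A × Bool) (i : V) :
    netInflow src tgt (rdir q) i
      = (if rtgt src tgt q = i then 1 else 0) - (if rsrc src tgt q = i then 1 else 0) := by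
  rcases q with ⟨a, _ | _⟩
  · simp only [netInflow_apply, rdir, rsrc, rtgt, sum_pi_single', mem_filter, mem_univ, true_and]
    split_ifs <;> ring
  · simp [netInflow_apply, rdir, rsrc, rtgt, sum_pi_single']

lemma netInflow_sum_rdir {l : List (A × Bool)}
    (hbal : (l.map (rtgt src tgt)).Perm (l.map (rsrc src tgt))) :
    netInflow src tgt (l.map rdir).sum = 0 := by
  ext i
  rw [map_list_sum, Pi.list_sum_apply]
  have := (hbal.map fun v => if v = i then (1 : ℤ) else 0).sum_eq
  simp only [List.map_map, Function.comp_def, netInflow_rdir, Pi.zero_apply] at this ⊢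
  rw [← Multiset.sum_coe, ← Multiset.map_coe, Multiset.sum_map_sub]
  simpa [sub_eq_zero] using this

end Residual

/-- A cycle of `F` as residual arcs with their order forgotten: only the balance of in- and
out-arcs at each node is kept. -/
def IsBalanced (src tgt : A → V) (F : Finset A) (l : List (A × Bool)) : Prop :=
  l ≠ [] ∧ (l.map Prod.fst).Nodup ∧ (∀ q ∈ l, q.1 ∈ F) ∧
    (l.map (rtgt src tgt)).Perm (l.map (rsrc src tgt))

lemma exists_feasible_freeArcs_ssubset_of_isBalanced [Fintype A] [DecidableEq V] [DecidableEq A]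
    {src tgt : A → V} {b : V → ℤ} {cap x : A → ℤ} (c : A → ℤ) (hx : IsFeasible src tgt b cap x)
    {l : List (A × Bool)} (hl : IsBalanced src tgt (freeArcs cap x) l) :
    ∃ x', IsFeasible src tgt b cap x' ∧ flowCost c x' ≤ flowCost c x ∧
      freeArcs cap x' ⊂ freeArcs cap x := by
  obtain ⟨hne, hnd, hfree, hbal⟩ := hl
  set D := (l.map rdir).sum
  have habs := abs_sum_rdir_apply hnd
  obtain ⟨D', hD', hcost⟩ : ∃ D', (D' = D ∨ D' = -D) ∧ flowCost c D' ≤ 0 := by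
    rcases le_total (flowCost c D) 0 with h | h
    · exact ⟨D, Or.inl rfl, h⟩
    · exact ⟨-D, Or.inr rfl, by simpa [flowCost_eq_dotProduct] using h⟩
  have habs' : ∀ a, |D' a| = if a ∈ l.map Prod.fst then 1 else 0 := by
    rcases hD' with rfl | rfl <;> simpa using habs
  refine exists_feasible_freeArcs_ssubset_of_circulation c hx ?_ (fun a => ?_) (fun a ha => ?_) ?_
    hcost
  · rcases hD' with rfl | rfl <;> simp [D, netInflow_sum_rdir hbal]
  · rw [habs']; split_ifs <;> norm_num
  · have : a ∈ l.map Prod.fst := by by_contra h; simp [← abs_eq_zero, habs', h] at ha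
    obtain ⟨q, hq, rfl⟩ := List.mem_map.mp this
    exact hfree q hq
  · obtain ⟨q, hq⟩ := List.exists_mem_of_ne_nil l hne
    refine Function.ne_iff.mpr ⟨q.1, fun h => ?_⟩
    simpa [h, List.mem_map_of_mem (f := Prod.fst) hq] using habs' q.1

def arcEdge (src tgt : A → V) (a : A) : Sym2 V := s(src a, tgt a)

def IsForest (src tgt : A → V) (F : Finset A) : Prop :=
  (∀ a ∈ F, src a ≠ tgt a) ∧ Set.InjOn (arcEdge src tgt) F ∧ (underlying src tgt F).IsAcyclic

section Graph

variable {src tgt : A → V}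

lemma underlying_eq_fromEdgeSet (T : Finset A) :
    underlying src tgt T = SimpleGraph.fromEdgeSet (arcEdge src tgt '' T) := by
  ext u v
  simp only [underlying, SimpleGraph.fromEdgeSet_adj, Set.mem_image, mem_coe, arcEdge,
    Sym2.eq_iff]
  exact and_comm

lemma edgeSet_underlying {T : Finset A} (hT : ∀ a ∈ T, src a ≠ tgt a) :
    (underlying src tgt T).edgeSet = arcEdge src tgt '' T := by
  rw [underlying_eq_fromEdgeSet, SimpleGraph.edgeSet_fromEdgeSet, sdiff_eq_left,
    Set.disjoint_left]
  rintro _ ⟨a, ha, rfl⟩ hdiag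
  exact hT a ha (Sym2.mk_isDiag_iff.mp hdiag)

lemma underlying_mono {T T' : Finset A} (h : T ⊆ T') :
    underlying src tgt T ≤ underlying src tgt T' := by
  simp only [underlying_eq_fromEdgeSet]
  exact SimpleGraph.fromEdgeSet_mono (Set.image_mono (coe_subset.mpr h))

lemma IsForest.exists_spanning_tree_superset [Fintype A] [Fintype V] {F : Finset A}
    (hconn : (underlying src tgt univ).Connected) (hF : IsForest src tgt F) :
    ∃ T : Finset A, F ⊆ T ∧ (underlying src tgt T).Connected ∧
      T.card = Fintype.card V - 1 := by
  obtain ⟨hloop, hinj, hacyc⟩ := hF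
  obtain ⟨H, hFH, hHG, htree⟩ :=
    hconn.exists_isTree_le_of_le_of_isAcyclic (underlying_mono (subset_univ F)) hacyc
  have hFH' : arcEdge src tgt '' F ⊆ H.edgeSet :=
    edgeSet_underlying hloop ▸ SimpleGraph.edgeSet_mono hFH
  have hHG' : Set.SurjOn (arcEdge src tgt) Set.univ H.edgeSet := fun e he => by
    have := SimpleGraph.edgeSet_mono hHG he
    rw [underlying_eq_fromEdgeSet, SimpleGraph.edgeSet_fromEdgeSet] at this
    simpa using this.1
  obtain ⟨S, hFS, -, hS⟩ := hinj.bijOn_image.exists_extend_of_subset (Set.subset_univ _) hFH' hHG'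
  classical
  have hSfin := S.toFinite
  refine ⟨hSfin.toFinset, by simpa using hFS, ?_⟩
  have hTH : underlying src tgt hSfin.toFinset = H := by
    rw [underlying_eq_fromEdgeSet, hSfin.coe_toFinset, hS.image_eq,
      SimpleGraph.fromEdgeSet_edgeSet]
  obtain ⟨hHconn, hcard⟩ := SimpleGraph.isTree_iff_connected_and_card.mp htree
  refine ⟨hTH ▸ hHconn, ?_⟩
  rw [← Set.ncard_eq_toFinset_card S hSfin, ← Nat.card_coe_set_eq,
    ← Nat.card_image_of_injOn hS.injOn, hS.image_eq, ← Nat.card_eq_fintype_card]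
  omega

end Graph

section Cycles

variable {src tgt : A → V} {F : Finset A}

lemma arcEdge_fst (q : A × Bool) : arcEdge src tgt q.1 = s(rsrc src tgt q, rtgt src tgt q) := by
  rcases q with ⟨a, _ | _⟩
  · exact Sym2.eq_swap
  · rfl

lemma isBalanced_singleton {a : A} (ha : a ∈ F) (hloop : src a = tgt a) :
    IsBalanced src tgt F [(a, true)] := by
  simp [IsBalanced, ha, rsrc, rtgt, hloop]

lemma exists_isBalanced_of_arcEdge_eq {a a' : A} (ha : a ∈ F) (ha' : a' ∈ F) (hne : a ≠ a')
    (h : arcEdge src tgt a = arcEdge src tgt a') : ∃ l, IsBalanced src tgt F l := by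
  rcases Sym2.eq_iff.mp h with ⟨h1, h2⟩ | ⟨h1, h2⟩
  · refine ⟨[(a, true), (a', false)], ?_⟩
    simp [IsBalanced, ha, ha', hne, rsrc, rtgt, h1, h2, List.Perm.swap]
  · refine ⟨[(a, true), (a', true)], ?_⟩
    simp [IsBalanced, ha, ha', hne, rsrc, rtgt, h1, h2, List.Perm.swap]

lemma SimpleGraph.Walk.support_tail_perm_dropLast {G : SimpleGraph V} {v : V} (p : G.Walk v v) :
    p.support.tail.Perm p.support.dropLast := by
  have h : v :: p.support.tail = p.support.dropLast ++ [v] := by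
    rw [p.cons_tail_support, p.dropLast_support_concat]
  exact (h ▸ List.perm_append_singleton v p.support.dropLast).cons_inv

lemma SimpleGraph.Walk.IsCycle.exists_isBalanced {v : V} {p : (underlying src tgt F).Walk v v}
    (hp : p.IsCycle) : ∃ l, IsBalanced src tgt F l := by
  have hdart : ∀ d : (underlying src tgt F).Dart, ∃ q : A × Bool, q.1 ∈ F ∧
      rsrc src tgt q = d.fst ∧ rtgt src tgt q = d.snd := by
    rintro ⟨⟨u, w⟩, -, a, ha, ⟨h1, h2⟩ | ⟨h1, h2⟩⟩
    · exact ⟨(a, true), ha, h1, h2⟩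
    · exact ⟨(a, false), ha, h2, h1⟩
  choose f hfF hfsrc hftgt using hdart
  refine ⟨p.darts.map f, ?_, ?_, by simpa using fun d _ => hfF d, ?_⟩
  · simpa [← SimpleGraph.Walk.length_darts] using hp.not_nil
  · refine List.Nodup.of_map (arcEdge src tgt) ?_
    convert hp.edges_nodup using 1
    simp [SimpleGraph.Walk.edges, arcEdge_fst, hfsrc, hftgt, SimpleGraph.Dart.edge]
  · simp only [List.map_map, Function.comp_def, hfsrc, hftgt]
    rw [SimpleGraph.Walk.map_snd_darts, SimpleGraph.Walk.map_fst_darts]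
    exact p.support_tail_perm_dropLast

lemma exists_isBalanced_of_not_isForest (h : ¬IsForest src tgt F) :
    ∃ l, IsBalanced src tgt F l := by
  simp only [IsForest, not_and_or, not_forall, not_not, Set.InjOn, exists_prop] at h
  rcases h with ⟨a, ha, hloop⟩ | ⟨a, ha, a', ha', h, hne⟩ | h
  · exact ⟨_, isBalanced_singleton ha hloop⟩
  · exact exists_isBalanced_of_arcEdge_eq ha ha' hne h
  · simp only [SimpleGraph.IsAcyclic, not_forall, not_not] at h
    obtain ⟨v, p, hp⟩ := h
    exact hp.exists_isBalanced

end Cycles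

lemma exists_feasible_isForest_freeArcs [Fintype A] [DecidableEq V] [DecidableEq A]
    {src tgt : A → V} {b : V → ℤ} {cap x : A → ℤ} (c : A → ℤ) (hx : IsFeasible src tgt b cap x) :
    ∃ y, IsFeasible src tgt b cap y ∧ flowCost c y ≤ flowCost c x ∧
      IsForest src tgt (freeArcs cap y) := by
  induction h : (freeArcs cap x).card using Nat.strong_induction_on generalizing x with
  | _ n ih =>
  by_cases hF : IsForest src tgt (freeArcs cap x)
  · exact ⟨x, hx, le_rfl, hF⟩
  obtain ⟨l, hl⟩ := exists_isBalanced_of_not_isForest hF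
  obtain ⟨x', hx', hcost, hsub⟩ := exists_feasible_freeArcs_ssubset_of_isBalanced c hx hl
  obtain ⟨y, hy, hcost', hyF⟩ := ih _ (h ▸ card_lt_card hsub) hx' rfl
  exact ⟨y, hy, hcost'.trans hcost, hyF⟩

theorem feasible_to_spanning_tree_solution_general
    [Fintype V] [Fintype A] [DecidableEq V] [DecidableEq A]
    (src tgt : A → V) (b : V → ℤ) (cap c : A → ℤ) (x : A → ℤ)
    (hconn : (underlying src tgt (Finset.univ : Finset A)).Connected)
    (hx : IsFeasible src tgt b cap x) :
    ∃ (x' : A → ℤ) (T L U : Finset A),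
      IsFeasible src tgt b cap x' ∧
      Disjoint T L ∧ Disjoint T U ∧ Disjoint L U ∧
      T ∪ L ∪ U = Finset.univ ∧
      (underlying src tgt T).Connected ∧ T.card = Fintype.card V - 1 ∧
      (∀ a ∈ L, x' a = 0) ∧ (∀ a ∈ U, x' a = cap a) ∧
      flowCost c x' ≤ flowCost c x := by
  obtain ⟨y, hy, hcost, hforest⟩ := exists_feasible_isForest_freeArcs c hx
  obtain ⟨T, hfreeT, hTconn, hTcard⟩ := hforest.exists_spanning_tree_superset hconn
  refine ⟨y, T, (univ \ T).filter (y · = 0), (univ \ T).filter (y · ≠ 0), hy,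
    disjoint_sdiff.mono_right (filter_subset _ _), disjoint_sdiff.mono_right (filter_subset _ _),
    disjoint_filter_filter_not _ _ _, ?_, hTconn, hTcard, fun a ha => (mem_filter.mp ha).2,
    fun a ha => ?_, hcost⟩
  · rw [union_assoc, filter_union_filter_not_eq, union_sdiff_of_subset (subset_univ T)]
  · obtain ⟨haT, hya⟩ := mem_filter.mp ha
    have hnotfree : a ∉ freeArcs cap y := fun h => (mem_sdiff.mp haT).2 (hfreeT h)
    simp only [freeArcs, mem_filter, mem_univ, true_and] at hnotfree
    have := hy.1 a
    omega

/-- any feasible flow can be transformed into a spanning tree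
solution of total cost no greater than that of the original flow. -/
theorem feasible_to_spanning_tree_solution
    [Fintype V] [Fintype A] [DecidableEq V] [DecidableEq A]
    (src tgt : A → V) (b : V → ℤ) (cap c : A → ℤ) (x : A → ℤ)
    (hconn : (underlying src tgt (Finset.univ : Finset A)).Connected)
    (hcap : ∀ a, 0 ≤ cap a)
    (hx : IsFeasible src tgt b cap x) :
    ∃ (x' : A → ℤ) (T L U : Finset A),
      IsFeasible src tgt b cap x' ∧
      Disjoint T L ∧ Disjoint T U ∧ Disjoint L U ∧
      T ∪ L ∪ U = Finset.univ ∧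
      (underlying src tgt T).Connected ∧ T.card = Fintype.card V - 1 ∧
      (∀ a ∈ L, x' a = 0) ∧ (∀ a ∈ U, x' a = cap a) ∧
      flowCost c x' ≤ flowCost c x :=
  feasible_to_spanning_tree_solution_general src tgt b cap c x hconn hx
end
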